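/- Let I be a Borel-fixed monomial ideal in R = k[x_1,...,x_r] and let n be a monomial with n ∉ I. If x_i · n ∈ I for all 1 ≤ i ≤ r−1, then either ann_{R/I}(n̄) = (x̄_1,...,x̄_{r−1}), in which case (x_1,...,x_{r-1}) is an associated prime of R/I, or there exists t ≥ 1 with x_r^{t−1}·n ∉ I and ann_{R/I}(x_r^{t−1}n) = (x̄_1,...,x̄_r), so that x_r^{t−1}n lies in the socle of R/I. -/

import Mathlib

open MvPolynomial

/-! In a monomial ideal `I`, a product `f * m` with a monomial `m` lies in `I` iff `μ * m ∈ I`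
for every monomial `μ` of `f`. Hence the annihilator of `m̄` is `(x_i : i ∈ s)` as soon as
`μ * m ∈ I` holds exactly for the monomials `μ` divisible by some `x_i` with `i ∈ s`. If no
`x_r^t n` lies in `I`, this holds for `m = n` and `s = {1, …, r - 1}`; otherwise it holds for
`m = x_r^t n` and all variables, where `t + 1` is the least exponent with `x_r^(t+1) n ∈ I`. -/

namespace MvPolynomial

variable {σ R : Type*}

section CommSemiring

variable [CommSemiring R]

variable (R) in
noncomputable abbrev monomialIdeal (S : Set (σ →₀ ℕ)) : Ideal (MvPolynomial σ R) :=
  Ideal.span ((fun s => monomial s (1 : R)) '' S)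

theorem support_mul_monomial_one (p : MvPolynomial σ R) (s : σ →₀ ℕ) :
    (p * monomial s (1 : R)).support = p.support.map (addRightEmbedding s) :=
  AddMonoidAlgebra.support_coeff_mul_single p _ (by simp) _

theorem monomial_one_mem_of_le {I : Ideal (MvPolynomial σ R)} {a b : σ →₀ ℕ}
    (ha : monomial a (1 : R) ∈ I) (hab : a ≤ b) : monomial b (1 : R) ∈ I :=
  I.mem_of_dvd (monomial_dvd_monomial.mpr ⟨Or.inr hab, one_dvd _⟩) ha

variable [Nontrivial R] {S : Set (σ →₀ ℕ)}

theorem monomial_one_mem_monomialIdeal_iff {m : σ →₀ ℕ} :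
    monomial m (1 : R) ∈ monomialIdeal R S ↔ ∃ s ∈ S, s ≤ m := by
  classical
  rw [mem_ideal_span_monomial_image, support_monomial, if_neg one_ne_zero]
  simp

theorem mul_monomial_one_mem_monomialIdeal_iff {p : MvPolynomial σ R} {ν : σ →₀ ℕ} :
    p * monomial ν 1 ∈ monomialIdeal R S ↔
      ∀ μ ∈ p.support, monomial (μ + ν) (1 : R) ∈ monomialIdeal R S := by
  simp only [monomial_one_mem_monomialIdeal_iff]
  rw [mem_ideal_span_monomial_image, support_mul_monomial_one, Finset.forall_mem_map]
  rfl

theorem setOf_mul_monomial_one_mem_eq_span_X_image {ν : σ →₀ ℕ} {s : Set σ}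
    (h : ∀ μ, monomial (μ + ν) (1 : R) ∈ monomialIdeal R S ↔ ∃ i ∈ s, μ i ≠ 0) :
    {p | p * monomial ν 1 ∈ monomialIdeal R S} =
      ↑(Ideal.span (X '' s) : Ideal (MvPolynomial σ R)) := by
  ext p
  simp only [Set.mem_ofPred_eq, SetLike.mem_coe, mul_monomial_one_mem_monomialIdeal_iff, h,
    mem_ideal_span_X_image]

theorem setOf_mul_monomial_one_mem_eq_span_X_ne {n : σ →₀ ℕ} (j : σ)
    (hann : ∀ i ≠ j, monomial (Finsupp.single i 1 + n) (1 : R) ∈ monomialIdeal R S)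
    (hpow : ∀ t, monomial (Finsupp.single j t + n) (1 : R) ∉ monomialIdeal R S) :
    {p | p * monomial n 1 ∈ monomialIdeal R S} =
      ↑(Ideal.span (X '' {i | i ≠ j}) : Ideal (MvPolynomial σ R)) := by
  refine setOf_mul_monomial_one_mem_eq_span_X_image fun μ => ⟨fun hμ => ?_, ?_⟩
  · by_contra! hμj
    have : μ = Finsupp.single j (μ j) := Finsupp.support_subset_singleton.mp fun i hi =>
      Finset.mem_singleton.mpr (by_contra fun hij => Finsupp.mem_support_iff.mp hi (hμj i hij))
    exact hpow (μ j) (this ▸ hμ)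
  · rintro ⟨i, hij, hi⟩
    have hμi : Finsupp.single i 1 ≤ μ :=
      Finsupp.single_le_iff.mpr (Nat.one_le_iff_ne_zero.mpr hi)
    exact monomial_one_mem_of_le (hann i hij) (add_le_add_left hμi n)

theorem setOf_mul_monomial_one_mem_eq_span_range_X {n : σ →₀ ℕ} (j : σ) {t : ℕ}
    (hann : ∀ i ≠ j, monomial (Finsupp.single i 1 + n) (1 : R) ∈ monomialIdeal R S)
    (ht : monomial (Finsupp.single j t + n) (1 : R) ∉ monomialIdeal R S)
    (hsucc : monomial (Finsupp.single j (t + 1) + n) (1 : R) ∈ monomialIdeal R S) :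
    {p | p * monomial (Finsupp.single j t + n) 1 ∈ monomialIdeal R S} =
      ↑(Ideal.span (Set.range X) : Ideal (MvPolynomial σ R)) := by
  rw [← Set.image_univ]
  refine setOf_mul_monomial_one_mem_eq_span_X_image fun μ => ⟨fun hμ => ?_, ?_⟩
  · by_contra! hμ0
    have : μ = 0 := Finsupp.ext fun i => hμ0 i trivial
    exact ht (by simpa [this] using hμ)
  · rintro ⟨i, -, hi⟩
    have hμi : Finsupp.single i 1 ≤ μ :=
      Finsupp.single_le_iff.mpr (Nat.one_le_iff_ne_zero.mpr hi)
    by_cases hij : i = j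
    · subst hij
      refine monomial_one_mem_of_le hsucc ?_
      calc Finsupp.single i (t + 1) + n = Finsupp.single i 1 + (Finsupp.single i t + n) := by
            rw [add_comm t 1, Finsupp.single_add, add_assoc]
        _ ≤ μ + (Finsupp.single i t + n) := add_le_add_left hμi _
    · refine monomial_one_mem_of_le (hann i hij) ?_
      calc Finsupp.single i 1 + n ≤ μ + n := add_le_add_left hμi n
        _ ≤ μ + (Finsupp.single j t + n) := add_le_add_right le_add_self μ

end CommSemiring

theorem isPrime_span_X_image [CommRing R] [IsDomain R] (s : Set σ) :
    (Ideal.span (X '' s : Set (MvPolynomial σ R))).IsPrime := by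
  -- `(X i : i ∈ s)` is the kernel of the substitution `X i ↦ 0` (`i ∈ s`) into a domain.
  have hinj : Function.Injective (Subtype.val : {i // i ∉ s} → σ) := Subtype.val_injective
  suffices Ideal.span (X '' s) = RingHom.ker (killCompl (R := R) hinj) by
    rw [this]; exact RingHom.ker_isPrime _
  refine le_antisymm (Ideal.span_le.mpr ?_) fun p hp => ?_
  · rintro _ ⟨i, hi, rfl⟩
    simp [killCompl, hi]
  rw [mem_ideal_span_X_image]
  intro m hm
  by_contra! hms
  have hsupp : ↑m.support ⊆ Set.range (Subtype.val : {i // i ∉ s} → σ) :=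
    fun i hi => ⟨⟨i, fun his => Finsupp.mem_support_iff.mp hi (hms i his)⟩, rfl⟩
  have hcoeff := congr_arg (coeff (m.comapDomain _ hinj.injOn)) (RingHom.mem_ker.mp hp)
  rw [coeff_killCompl, Finsupp.mapDomain_comapDomain _ hinj _ hsupp, coeff_zero] at hcoeff
  exact mem_support_iff.mp hm hcoeff

end MvPolynomial

theorem Ideal.isAssociatedPrime_quotient_of_setOf_mul_mem_eq {A : Type*} [CommRing A]
    {I P : Ideal A} (hP : P.IsPrime) {a : A} (h : {f | f * a ∈ I} = P) :
    IsAssociatedPrime P (A ⧸ I) := by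
  refine ⟨hP, Ideal.Quotient.mk I a, ?_⟩
  suffices Submodule.colon ⊥ {Ideal.Quotient.mk I a} = P by rw [this, hP.radical]
  ext f
  rw [Submodule.mem_colon_singleton, Submodule.mem_bot, ← SetLike.mem_coe, ← h]
  exact Ideal.Quotient.eq_zero_iff_mem

/-- let `I` be Borel-fixed (if `x_j·m ∈ I` then `x_i·m ∈ I` for `i < j`) and `n` a
monomial not in `I` with `x_i·n ∈ I` for all `i ≤ r−1`.  Then either the annihilator of `n̄` in
`R/I` is exactly `(x_1,...,x_{r−1})`, which is then an associated prime of `R/I`, or there is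
`t ≥ 1` with `x_r^{t−1}·n ∉ I` whose annihilator is the full maximal ideal, i.e. `x_r^{t−1}·n`
lies in the socle of `R/I`. -/
theorem annihilator_dichotomy {k : Type*} [Field k] {r : ℕ} (hr : 0 < r)
    (I : Ideal (MvPolynomial (Fin r) k))
    (hmono : ∃ S : Set (Fin r →₀ ℕ), I = Ideal.span ((fun J => monomial J (1 : k)) '' S))
    (n : Fin r →₀ ℕ) (hn : monomial n (1 : k) ∉ I)
    (hann : ∀ i : Fin r, i.val < r - 1 → X i * monomial n (1 : k) ∈ I) :
    ({f : MvPolynomial (Fin r) k | f * monomial n (1 : k) ∈ I} =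
        ↑(Ideal.span ((fun i => (X i : MvPolynomial (Fin r) k)) '' {i : Fin r | i.val < r - 1})) ∧
      IsAssociatedPrime
        (Ideal.span ((fun i => (X i : MvPolynomial (Fin r) k)) '' {i : Fin r | i.val < r - 1}))
        (MvPolynomial (Fin r) k ⧸ I)) ∨
    (∃ t : ℕ, 1 ≤ t ∧
      (X ⟨r - 1, by omega⟩ : MvPolynomial (Fin r) k) ^ (t - 1) * monomial n (1 : k) ∉ I ∧
      {f : MvPolynomial (Fin r) k |
          f * ((X ⟨r - 1, by omega⟩ : MvPolynomial (Fin r) k) ^ (t - 1) *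
            monomial n (1 : k)) ∈ I} =
        ↑(Ideal.span (Set.range (X : Fin r → MvPolynomial (Fin r) k)))) := by
  obtain ⟨S, rfl⟩ := hmono
  set last : Fin r := ⟨r - 1, by omega⟩
  have hlt (i : Fin r) : i.val < r - 1 ↔ i ≠ last := by
    rw [ne_eq, Fin.ext_iff, show (last : ℕ) = r - 1 from rfl]
    omega
  have hann' : ∀ i ≠ last, monomial (Finsupp.single i 1 + n) (1 : k) ∈ monomialIdeal k S :=
    fun i hi => by simpa only [monomial_single_add, pow_one] using hann i ((hlt i).mpr hi)
  rw [show {i : Fin r | i.val < r - 1} = {i | i ≠ last} from Set.ext hlt]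
  by_cases hpow : ∃ t, monomial (Finsupp.single last t + n) (1 : k) ∈ monomialIdeal k S
  · obtain ⟨t, ht, hsucc⟩ :=
      Nat.exists_not_and_succ_of_not_zero_of_exists (by simpa using hn) hpow
    refine Or.inr ⟨t + 1, le_add_self, ?_⟩
    simp only [add_tsub_cancel_right, ← monomial_single_add]
    exact ⟨ht, setOf_mul_monomial_one_mem_eq_span_range_X last hann' ht hsucc⟩
  · simp only [not_exists] at hpow
    have hcolon := setOf_mul_monomial_one_mem_eq_span_X_ne last hann' hpow
    exact Or.inl ⟨hcolon, Ideal.isAssociatedPrime_quotient_of_setOf_mul_mem_eq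
      (isPrime_span_X_image _) hcolon⟩
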